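/- Let V(ρ₁,ρ₂) = (1/π) sin(πρ₁) sin(πρ₂)/sin(π(1-ρ₁-ρ₂)) and define G(s₁,s₂) = (1 + s₂/2)[ρ₁ρ₂ - (ρ₁+ρ₂)V(ρ₁,ρ₂)] where (ρ₁,ρ₂) = ((1-s₁)/(2+s₂), (1+s₁)/(2+s₂)). Also define σ̂(s₁,s₂) = (1 + s₂/2) σ(ρ(s₁,s₂)) where σ is the lozenge surface tension. Then ∂_{s₁}G = σ̂₁₂/σ̂₁₁ and ∂_{s₂}G = (1/2) σ̂₂₂/σ̂₁₁ on (-1,1) × (0,∞). -/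

import Mathlib

/-!
Write `P, Q, R` for the cotangents of the angles `πρ₁, πρ₂, πρ₃ = π (1 - ρ₁ - ρ₂)` of the triangle.
Since `Λ'(θ) = log (2 sin θ)`, the Hessian of `σ` is `π [[P + R, R], [R, Q + R]]`, and
`V = 1 / (π (P + Q))`, so that `G = (1 + s₂/2) ρ₁ρ₂ - 1 / (π (P + Q))`. As `σ̂` is half the
perspective `τ σ(u / τ)` of `σ`, with `τ = 2 + s₂` and `u = (1 - s₁, 1 + s₁)`,
`σ̂₁₁ = π (P + Q) / (2τ)`, `σ̂₁₂ = π (ρ₁P - ρ₂Q) / (2τ)` and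
`σ̂₂₂ = π (ρ₁²P + ρ₂²Q + (ρ₁ + ρ₂)²R) / (2τ)`. Differentiating `G` with `cot' = -(1 + cot²)` gives
rational expressions in `ρ, P, Q`: the first identity is then immediate, and the second follows from
`R = (1 - PQ) / (P + Q)`, which expresses that the three angles sum to `π`.
-/

open Real

/-- The Lobachevsky-type function `Λ(θ) = ∫₀^θ ln(2 sin t) dt`. -/
noncomputable def Lob (θ : ℝ) : ℝ := ∫ t in (0 : ℝ)..θ, Real.log (2 * Real.sin t)

/-- The lozenge surface tension. -/
noncomputable def surfTen (ρ₁ ρ₂ : ℝ) : ℝ :=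
  (1 / π) * (Lob (π * ρ₁) + Lob (π * ρ₂) + Lob (π * (1 - ρ₁ - ρ₂)))

/-- The stationary interface speed `V(ρ)`. -/
noncomputable def Vspeed (ρ₁ ρ₂ : ℝ) : ℝ :=
  (1 / π) * Real.sin (π * ρ₁) * Real.sin (π * ρ₂) / Real.sin (π * (1 - ρ₁ - ρ₂))

/-- First slope coordinate `ρ₁(s) = (1-s₁)/(2+s₂)`. -/
noncomputable def rho1 (s₁ s₂ : ℝ) : ℝ := (1 - s₁) / (2 + s₂)

/-- Second slope coordinate `ρ₂(s) = (1+s₁)/(2+s₂)`. -/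
noncomputable def rho2 (s₁ s₂ : ℝ) : ℝ := (1 + s₁) / (2 + s₂)

/-- The flux function `G`. -/
noncomputable def Gfun (s₁ s₂ : ℝ) : ℝ :=
  (1 + s₂ / 2) * (rho1 s₁ s₂ * rho2 s₁ s₂
    - (rho1 s₁ s₂ + rho2 s₁ s₂) * Vspeed (rho1 s₁ s₂) (rho2 s₁ s₂))

/-- The surface tension in level-set coordinates, `σ̂(s) = (1+s₂/2)σ(ρ(s))`. -/
noncomputable def sigmaHat (s₁ s₂ : ℝ) : ℝ :=
  (1 + s₂ / 2) * surfTen (rho1 s₁ s₂) (rho2 s₁ s₂)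

/-- Partial derivative in the first variable. -/
noncomputable def p1 (f : ℝ → ℝ → ℝ) (x y : ℝ) : ℝ := deriv (fun x' => f x' y) x

/-- Partial derivative in the second variable. -/
noncomputable def p2 (f : ℝ → ℝ → ℝ) (x y : ℝ) : ℝ := deriv (fun y' => f x y') y

open Topology Set

noncomputable def logTwoSinPi (t : ℝ) : ℝ := log (2 * sin (π * t))

noncomputable def cotPi (t : ℝ) : ℝ := cot (π * t)

lemma hasDerivAt_Lob {θ : ℝ} (hθ : sin θ ≠ 0) : HasDerivAt Lob (log (2 * sin θ)) θ := by
  have hmeromorphic : MeromorphicOn (fun t => 2 * sin t) (uIcc 0 θ) :=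
    (analyticOnNhd_const.mul analyticOnNhd_sin).meromorphicOn
  have hmeasurable : Measurable fun t => log (2 * sin t) := by fun_prop
  exact intervalIntegral.integral_hasDerivAt_right hmeromorphic.intervalIntegrable_log
    hmeasurable.stronglyMeasurable.stronglyMeasurableAtFilter
    ((continuousAt_log (by positivity)).comp (by fun_prop))

lemma cot_add_cot {a b : ℝ} (ha : sin a ≠ 0) (hb : sin b ≠ 0) :
    cot a + cot b = sin (a + b) / (sin a * sin b) := by
  rw [cot_eq_cos_div_sin, cot_eq_cos_div_sin, sin_add]
  field_simp
  ring

lemma hasDerivAt_cot {θ : ℝ} (hθ : sin θ ≠ 0) : HasDerivAt cot (-(1 + cot θ ^ 2)) θ := by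
  have h := (hasDerivAt_cos θ).div (hasDerivAt_sin θ) hθ
  rw [show cos / sin = cot from funext fun x => (cot_eq_cos_div_sin x).symm] at h
  refine h.congr_deriv ?_
  rw [cot_eq_cos_div_sin]
  field_simp
  ring

section OneVariable

variable {t : ℝ}

lemma hasDerivAt_Lob_pi_mul (ht : sin (π * t) ≠ 0) :
    HasDerivAt (fun s => Lob (π * s)) (π * logTwoSinPi t) t := by
  have h := (hasDerivAt_Lob ht).comp t ((hasDerivAt_id t).const_mul π)
  exact h.congr_deriv (by simp only [logTwoSinPi, mul_one]; ring)

lemma hasDerivAt_logTwoSinPi (ht : sin (π * t) ≠ 0) :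
    HasDerivAt logTwoSinPi (π * cotPi t) t := by
  have hsin := ((hasDerivAt_sin (π * t)).comp t ((hasDerivAt_id t).const_mul π)).const_mul 2
  have h := (hasDerivAt_log (by positivity)).comp t hsin
  refine h.congr_deriv ?_
  simp only [Function.comp_def, cotPi, cot_eq_cos_div_sin, mul_one]
  field_simp

lemma hasDerivAt_cotPi (ht : sin (π * t) ≠ 0) :
    HasDerivAt cotPi (-(π * (1 + cotPi t ^ 2))) t := by
  have h := (hasDerivAt_cot ht).comp t ((hasDerivAt_id t).const_mul π)
  exact h.congr_deriv (by simp only [cotPi, mul_one]; ring)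

end OneVariable

lemma sin_pi_mul_pos {t : ℝ} (h₀ : 0 < t) (h₁ : t < 1) : 0 < sin (π * t) :=
  sin_pos_of_pos_of_lt_pi (by positivity) (by nlinarith [pi_pos])

lemma sin_pi_mul_one_sub_sub (a b : ℝ) : sin (π * (1 - a - b)) = sin (π * a + π * b) := by
  rw [← sin_pi_sub]; ring_nf

lemma Vspeed_eq {a b : ℝ} (ha : sin (π * a) ≠ 0) (hb : sin (π * b) ≠ 0) :
    Vspeed a b = (π * (cotPi a + cotPi b))⁻¹ := by
  rw [Vspeed, cotPi, cotPi, cot_add_cot ha hb, sin_pi_mul_one_sub_sub]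
  field_simp

lemma cotPi_one_sub_sub {a b : ℝ} (ha : sin (π * a) ≠ 0) (hb : sin (π * b) ≠ 0) :
    cotPi (1 - a - b) = (1 - cotPi a * cotPi b) / (cotPi a + cotPi b) := by
  have hab : π * (1 - a - b) = π - (π * a + π * b) := by ring
  rw [cotPi, cotPi, cotPi, cot_add_cot ha hb, hab, cot_eq_cos_div_sin, cos_pi_sub, sin_pi_sub,
    cot_eq_cos_div_sin, cot_eq_cos_div_sin, cos_add]
  field_simp
  ring

lemma cotPi_add_cotPi_pos {a b : ℝ} (ha : 0 < a) (hb : 0 < b) (hab : a + b < 1) :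
    0 < cotPi a + cotPi b := by
  rw [cotPi, cotPi, cot_add_cot (sin_pi_mul_pos ha (by linarith)).ne'
    (sin_pi_mul_pos hb (by linarith)).ne', ← sin_pi_mul_one_sub_sub]
  have := sin_pi_mul_pos ha (by linarith)
  have := sin_pi_mul_pos hb (by linarith)
  have := sin_pi_mul_pos (t := 1 - a - b) (by linarith) (by linarith)
  positivity

lemma HasDerivAt.surfTen {u v : ℝ → ℝ} {u' v' t : ℝ} (hu : HasDerivAt u u' t)
    (hv : HasDerivAt v v' t) (h₁ : Real.sin (π * u t) ≠ 0) (h₂ : Real.sin (π * v t) ≠ 0)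
    (h₃ : Real.sin (π * (1 - u t - v t)) ≠ 0) :
    HasDerivAt (fun s => surfTen (u s) (v s))
      ((logTwoSinPi (u t) - logTwoSinPi (1 - u t - v t)) * u'
        + (logTwoSinPi (v t) - logTwoSinPi (1 - u t - v t)) * v') t := by
  have h := (((hasDerivAt_Lob_pi_mul h₁).comp t hu).add
    ((hasDerivAt_Lob_pi_mul h₂).comp t hv)).add
    ((hasDerivAt_Lob_pi_mul h₃).comp t (((hasDerivAt_const t 1).sub hu).sub hv))
  refine (h.const_mul (1 / π)).congr_deriv ?_
  field_simp
  ring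

section Coordinates

variable {x y : ℝ}

lemma rho_mem_triangle (hx₁ : -1 < x) (hx₂ : x < 1) (hy : 0 < y) :
    0 < rho1 x y ∧ 0 < rho2 x y ∧ rho1 x y + rho2 x y < 1 := by
  have hτ : 0 < 2 + y := by linarith
  refine ⟨div_pos (by linarith) hτ, div_pos (by linarith) hτ, ?_⟩
  rw [rho1, rho2, ← add_div, div_lt_one hτ]
  linarith

lemma sin_pi_mul_rho_pos (hx₁ : -1 < x) (hx₂ : x < 1) (hy : 0 < y) :
    0 < sin (π * rho1 x y) ∧ 0 < sin (π * rho2 x y) ∧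
      0 < sin (π * (1 - rho1 x y - rho2 x y)) := by
  obtain ⟨h₁, h₂, h₃⟩ := rho_mem_triangle hx₁ hx₂ hy
  exact ⟨sin_pi_mul_pos h₁ (by linarith), sin_pi_mul_pos h₂ (by linarith),
    sin_pi_mul_pos (by linarith) (by linarith)⟩

lemma hasDerivAt_rho1_fst : HasDerivAt (rho1 · y) (-(2 + y)⁻¹) x :=
  ((hasDerivAt_id x).const_sub 1).div_const (2 + y) |>.congr_deriv (by ring)

lemma hasDerivAt_rho2_fst : HasDerivAt (rho2 · y) (2 + y)⁻¹ x :=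
  ((hasDerivAt_id x).const_add 1).div_const (2 + y) |>.congr_deriv (by ring)

lemma hasDerivAt_rho1_snd (hτ : 2 + y ≠ 0) :
    HasDerivAt (rho1 x ·) (-(rho1 x y / (2 + y))) y :=
  ((hasDerivAt_const y (1 - x)).div ((hasDerivAt_id y).const_add 2) hτ).congr_deriv
    (by simp only [rho1, id]; field_simp; ring)

lemma hasDerivAt_rho2_snd (hτ : 2 + y ≠ 0) :
    HasDerivAt (rho2 x ·) (-(rho2 x y / (2 + y))) y :=
  ((hasDerivAt_const y (1 + x)).div ((hasDerivAt_id y).const_add 2) hτ).congr_deriv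
    (by simp only [rho2, id]; field_simp; ring)

end Coordinates

section Partials

variable {x y : ℝ}

lemma hasDerivAt_sigmaHat_fst (hx₁ : -1 < x) (hx₂ : x < 1) (hy : 0 < y) :
    HasDerivAt (sigmaHat · y) ((logTwoSinPi (rho2 x y) - logTwoSinPi (rho1 x y)) / 2) x := by
  obtain ⟨h₁, h₂, h₃⟩ := sin_pi_mul_rho_pos hx₁ hx₂ hy
  have hτ : 2 + y ≠ 0 := by positivity
  have h := (hasDerivAt_rho1_fst.surfTen hasDerivAt_rho2_fst h₁.ne' h₂.ne' h₃.ne').const_mul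
    (1 + y / 2)
  refine h.congr_deriv ?_
  field_simp
  ring

lemma hasDerivAt_sigmaHat_snd (hx₁ : -1 < x) (hx₂ : x < 1) (hy : 0 < y) :
    HasDerivAt (sigmaHat x ·)
      ((surfTen (rho1 x y) (rho2 x y) - rho1 x y * logTwoSinPi (rho1 x y)
        - rho2 x y * logTwoSinPi (rho2 x y)
        + (rho1 x y + rho2 x y) * logTwoSinPi (1 - rho1 x y - rho2 x y)) / 2) y := by
  obtain ⟨h₁, h₂, h₃⟩ := sin_pi_mul_rho_pos hx₁ hx₂ hy
  have hτ : 2 + y ≠ 0 := by positivity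
  have h := (((hasDerivAt_id y).div_const 2).const_add 1).mul
    ((hasDerivAt_rho1_snd hτ).surfTen (hasDerivAt_rho2_snd hτ) h₁.ne' h₂.ne' h₃.ne')
  refine h.congr_deriv ?_
  simp only [id_eq]
  field_simp
  ring

lemma p1_p1_sigmaHat (hx₁ : -1 < x) (hx₂ : x < 1) (hy : 0 < y) :
    p1 (p1 sigmaHat) x y = π * (cotPi (rho1 x y) + cotPi (rho2 x y)) / (2 * (2 + y)) := by
  obtain ⟨h₁, h₂, -⟩ := sin_pi_mul_rho_pos hx₁ hx₂ hy
  have hτ : 2 + y ≠ 0 := by positivity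
  have hloc : (p1 sigmaHat · y) =ᶠ[𝓝 x]
      fun x' => (logTwoSinPi (rho2 x' y) - logTwoSinPi (rho1 x' y)) / 2 := by
    filter_upwards [Ioo_mem_nhds hx₁ hx₂] with x' hx'
    exact (hasDerivAt_sigmaHat_fst hx'.1 hx'.2 hy).deriv
  have h := (((hasDerivAt_logTwoSinPi h₂.ne').comp x hasDerivAt_rho2_fst).sub
    ((hasDerivAt_logTwoSinPi h₁.ne').comp x hasDerivAt_rho1_fst)).div_const 2
  exact ((h.congr_of_eventuallyEq hloc).congr_deriv (by field_simp; ring)).deriv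

lemma p2_p1_sigmaHat (hx₁ : -1 < x) (hx₂ : x < 1) (hy : 0 < y) :
    p2 (p1 sigmaHat) x y =
      π * (rho1 x y * cotPi (rho1 x y) - rho2 x y * cotPi (rho2 x y)) / (2 * (2 + y)) := by
  obtain ⟨h₁, h₂, -⟩ := sin_pi_mul_rho_pos hx₁ hx₂ hy
  have hτ : 2 + y ≠ 0 := by positivity
  have hloc : (p1 sigmaHat x ·) =ᶠ[𝓝 y]
      fun y' => (logTwoSinPi (rho2 x y') - logTwoSinPi (rho1 x y')) / 2 := by
    filter_upwards [Ioi_mem_nhds hy] with y' hy'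
    exact (hasDerivAt_sigmaHat_fst hx₁ hx₂ hy').deriv
  have h := (((hasDerivAt_logTwoSinPi h₂.ne').comp y (hasDerivAt_rho2_snd hτ)).sub
    ((hasDerivAt_logTwoSinPi h₁.ne').comp y (hasDerivAt_rho1_snd hτ))).div_const 2
  exact ((h.congr_of_eventuallyEq hloc).congr_deriv (by field_simp; ring)).deriv

lemma p2_p2_sigmaHat (hx₁ : -1 < x) (hx₂ : x < 1) (hy : 0 < y) :
    p2 (p2 sigmaHat) x y =
      π * (rho1 x y ^ 2 * cotPi (rho1 x y) + rho2 x y ^ 2 * cotPi (rho2 x y)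
        + (rho1 x y + rho2 x y) ^ 2 * cotPi (1 - rho1 x y - rho2 x y)) / (2 * (2 + y)) := by
  obtain ⟨h₁, h₂, h₃⟩ := sin_pi_mul_rho_pos hx₁ hx₂ hy
  have hτ : 2 + y ≠ 0 := by positivity
  have hloc : (p2 sigmaHat x ·) =ᶠ[𝓝 y]
      fun y' => (surfTen (rho1 x y') (rho2 x y') - rho1 x y' * logTwoSinPi (rho1 x y')
        - rho2 x y' * logTwoSinPi (rho2 x y')
        + (rho1 x y' + rho2 x y') * logTwoSinPi (1 - rho1 x y' - rho2 x y')) / 2 := by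
    filter_upwards [Ioi_mem_nhds hy] with y' hy'
    exact (hasDerivAt_sigmaHat_snd hx₁ hx₂ hy').deriv
  have hρ₁ := hasDerivAt_rho1_snd (x := x) hτ
  have hρ₂ := hasDerivAt_rho2_snd (x := x) hτ
  have hρ₃ := ((hasDerivAt_const y (1 : ℝ)).sub hρ₁).sub hρ₂
  have h := ((((hρ₁.surfTen hρ₂ h₁.ne' h₂.ne' h₃.ne').sub
    (hρ₁.mul ((hasDerivAt_logTwoSinPi h₁.ne').comp y hρ₁))).sub
    (hρ₂.mul ((hasDerivAt_logTwoSinPi h₂.ne').comp y hρ₂))).add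
    ((hρ₁.add hρ₂).mul ((hasDerivAt_logTwoSinPi h₃.ne').comp y hρ₃))).div_const 2
  refine ((h.congr_of_eventuallyEq hloc).congr_deriv ?_).deriv
  simp only [Function.comp_apply, Pi.add_apply, Pi.sub_apply]
  field_simp
  ring

end Partials

section Flux

variable {x y : ℝ}

lemma Gfun_eq (hx₁ : -1 < x) (hx₂ : x < 1) (hy : 0 < y) :
    Gfun x y = (1 + y / 2) * (rho1 x y * rho2 x y)
      - (π * (cotPi (rho1 x y) + cotPi (rho2 x y)))⁻¹ := by
  obtain ⟨h₁, h₂, -⟩ := sin_pi_mul_rho_pos hx₁ hx₂ hy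
  have hτ : 2 + y ≠ 0 := by positivity
  have hsum : (1 + y / 2) * (rho1 x y + rho2 x y) = 1 := by
    simp only [rho1, rho2]
    field_simp
    ring
  rw [Gfun, Vspeed_eq h₁.ne' h₂.ne']
  linear_combination -(π * (cotPi (rho1 x y) + cotPi (rho2 x y)))⁻¹ * hsum

lemma p1_Gfun (hx₁ : -1 < x) (hx₂ : x < 1) (hy : 0 < y) :
    p1 Gfun x y = (rho1 x y * cotPi (rho1 x y) - rho2 x y * cotPi (rho2 x y))
      / (cotPi (rho1 x y) + cotPi (rho2 x y)) := by
  obtain ⟨h₁, h₂, -⟩ := sin_pi_mul_rho_pos hx₁ hx₂ hy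
  obtain ⟨hρ₁, hρ₂, hρ⟩ := rho_mem_triangle hx₁ hx₂ hy
  have hτ : 2 + y ≠ 0 := by positivity
  have hPQ := cotPi_add_cotPi_pos hρ₁ hρ₂ hρ
  have hloc : (Gfun · y) =ᶠ[𝓝 x] fun x' => (1 + y / 2) * (rho1 x' y * rho2 x' y)
      - (π * (cotPi (rho1 x' y) + cotPi (rho2 x' y)))⁻¹ := by
    filter_upwards [Ioo_mem_nhds hx₁ hx₂] with x' hx'
    exact Gfun_eq hx'.1 hx'.2 hy
  have hρ₁' := hasDerivAt_rho1_fst (x := x) (y := y)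
  have hρ₂' := hasDerivAt_rho2_fst (x := x) (y := y)
  have hP := (hasDerivAt_cotPi h₁.ne').comp x hρ₁'
  have hQ := (hasDerivAt_cotPi h₂.ne').comp x hρ₂'
  have h := ((hρ₁'.mul hρ₂').const_mul (1 + y / 2)).sub
    (((hP.add hQ).const_mul π).inv (by simp only [Pi.add_apply, Function.comp_apply]; positivity))
  refine ((h.congr_of_eventuallyEq hloc).congr_deriv ?_).deriv
  simp only [Function.comp_apply, Pi.add_apply]
  generalize cotPi (rho1 x y) = P at hPQ ⊢
  generalize cotPi (rho2 x y) = Q at hPQ ⊢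
  simp only [rho1, rho2]
  field_simp
  ring

lemma p2_Gfun (hx₁ : -1 < x) (hx₂ : x < 1) (hy : 0 < y) :
    p2 Gfun x y = (rho1 x y ^ 2 * cotPi (rho1 x y) + rho2 x y ^ 2 * cotPi (rho2 x y)
        + (rho1 x y + rho2 x y) ^ 2 * cotPi (1 - rho1 x y - rho2 x y))
      / (2 * (cotPi (rho1 x y) + cotPi (rho2 x y))) := by
  obtain ⟨h₁, h₂, -⟩ := sin_pi_mul_rho_pos hx₁ hx₂ hy
  obtain ⟨hρ₁, hρ₂, hρ⟩ := rho_mem_triangle hx₁ hx₂ hy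
  have hτ : 2 + y ≠ 0 := by positivity
  have hPQ := cotPi_add_cotPi_pos hρ₁ hρ₂ hρ
  have hloc : (Gfun x ·) =ᶠ[𝓝 y] fun y' => (1 + y' / 2) * (rho1 x y' * rho2 x y')
      - (π * (cotPi (rho1 x y') + cotPi (rho2 x y')))⁻¹ := by
    filter_upwards [Ioi_mem_nhds hy] with y' hy'
    exact Gfun_eq hx₁ hx₂ hy'
  have hρ₁' := hasDerivAt_rho1_snd (x := x) hτ
  have hρ₂' := hasDerivAt_rho2_snd (x := x) hτ
  have hP := (hasDerivAt_cotPi h₁.ne').comp y hρ₁'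
  have hQ := (hasDerivAt_cotPi h₂.ne').comp y hρ₂'
  have h := ((((hasDerivAt_id y).div_const 2).const_add 1).mul (hρ₁'.mul hρ₂')).sub
    (((hP.add hQ).const_mul π).inv (by simp only [Pi.add_apply, Function.comp_apply]; positivity))
  refine ((h.congr_of_eventuallyEq hloc).congr_deriv ?_).deriv
  rw [cotPi_one_sub_sub h₁.ne' h₂.ne']
  simp only [Function.comp_apply, Pi.add_apply, Pi.mul_apply, id_eq]
  generalize cotPi (rho1 x y) = P at hPQ ⊢
  generalize cotPi (rho2 x y) = Q at hPQ ⊢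
  simp only [rho1, rho2]
  field_simp
  ring

end Flux

theorem G_partials_eq_sigmaHat_ratios (s₁ s₂ : ℝ)
    (h1 : -1 < s₁) (h2 : s₁ < 1) (h3 : 0 < s₂) :
    p1 Gfun s₁ s₂ = p2 (p1 sigmaHat) s₁ s₂ / p1 (p1 sigmaHat) s₁ s₂ ∧
    p2 Gfun s₁ s₂ = (1 / 2) * p2 (p2 sigmaHat) s₁ s₂ / p1 (p1 sigmaHat) s₁ s₂ := by
  obtain ⟨hρ₁, hρ₂, hρ⟩ := rho_mem_triangle h1 h2 h3
  have hPQ := cotPi_add_cotPi_pos hρ₁ hρ₂ hρ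
  have hτ : 2 + s₂ ≠ 0 := by positivity
  rw [p1_Gfun h1 h2 h3, p2_Gfun h1 h2 h3, p1_p1_sigmaHat h1 h2 h3, p2_p1_sigmaHat h1 h2 h3,
    p2_p2_sigmaHat h1 h2 h3]
  constructor <;> field_simp
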